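/- Let P ⊆ ℝ^2 be finite, each site present independently (unipoint model), and let T = {x ∈ ℝ^2 : τ(x, P) ≥ t_0} be the Tukey region of depth t_0. For a query point q ∉ T, let ℓ_1, ℓ_2 be the two tangent lines of T from q, and P_q = P ∩ (ℓ_1^- ∪ ℓ_2^-) where ℓ_i^- is the halfplane bounded by ℓ_i not containing T. Then |P_q| ≤ 4·t_0. -/

import Mathlib

/-!
Let `x ∈ T` lie on a supporting line of `T` and let `B` be the sites strictly beyond that line.
If `|B| ≥ 2 t₀ - 1`, choose a ray from `x` through a site `s ∈ B` with at least `t₀` sites of `B`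
weakly on each side. The point `y` of the segment `x s` that is as close to the line as the
nearest site of `B` lies beyond the line, hence outside `T`: some closed halfplane contains `y`
and fewer than `t₀` sites, and it misses `x ∈ T`. But such a halfplane contains every site of `B`
on one side of the ray. So each tangent halfplane holds at most `2 t₀ - 2` sites.
-/

open scoped RealInnerProductSpace
attribute [local instance] Classical.propDecidable

noncomputable section

abbrev E2 := EuclideanSpace ℝ (Fin 2)

/-- Tukey depth of `p` with respect to a finite planar set `Q`. -/
def tukeyDepth (Q : Finset E2) (p : E2) : ℕ :=
  sInf {n : ℕ | ∃ v : E2, v ≠ 0 ∧ ∃ c : ℝ,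
    c ≤ ⟪v, p⟫ ∧ n = (Q.filter fun x => c ≤ ⟪v, x⟫).card}

open Finset

theorem Finset.exists_median {α β : Type*} [LinearOrder β] (B : Finset α) (f : α → β)
    (hB : B.Nonempty) :
    ∃ m ∈ B, #B ≤ 2 * #{p ∈ B | f p ≤ f m} ∧ #B ≤ 2 * #{p ∈ B | f m ≤ f p} := by
  set C := {m ∈ B | #B ≤ 2 * #{p ∈ B | f p ≤ f m}}
  have hC : C.Nonempty := by
    obtain ⟨m, hm, hmax⟩ := B.exists_max_image f hB
    refine ⟨m, mem_filter.2 ⟨hm, ?_⟩⟩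
    rw [filter_true_of_mem hmax]
    omega
  obtain ⟨m, hmC, hmin⟩ := C.exists_min_image f hC
  rw [mem_filter] at hmC
  refine ⟨m, hmC.1, hmC.2, ?_⟩
  have hsplit : #{p ∈ B | f m ≤ f p} + #{p ∈ B | f p < f m} = #B := by
    simpa only [not_le] using card_filter_add_card_filter_not (s := B) (fun p => f m ≤ f p)
  by_contra! h
  -- otherwise the largest value below `f m` would be a smaller element of `C`
  have hlt : {p ∈ B | f p < f m}.Nonempty := card_pos.1 (by omega)
  obtain ⟨m', hm', hmax'⟩ := exists_max_image _ f hlt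
  rw [mem_filter] at hm'
  have hsub : {p ∈ B | f p < f m} ⊆ {p ∈ B | f p ≤ f m'} :=
    fun p hp => mem_filter.2 ⟨(mem_filter.1 hp).1, hmax' p hp⟩
  have hm'C : m' ∈ C := mem_filter.2 ⟨hm'.1, by have := card_le_card hsub; omega⟩
  exact (hmin m' hm'C).not_gt hm'.2

def cross (a b : E2) : ℝ := a 0 * b 1 - a 1 * b 0

def tanAngle (v a : E2) : ℝ := cross v a / ⟪v, a⟫

lemma inner_eq_coords (a b : E2) : ⟪a, b⟫ = a 0 * b 0 + a 1 * b 1 := by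
  simp only [PiLp.inner_apply, RCLike.inner_apply, conj_trivial, Fin.sum_univ_two]
  ring

lemma cross_smul_left (r : ℝ) (a b : E2) : cross (r • a) b = r * cross a b := by
  simp only [cross, PiLp.smul_apply, smul_eq_mul]
  ring

lemma cross_swap (a b : E2) : cross b a = -cross a b := by
  simp only [cross]
  ring

lemma inner_mul_inner_sub_inner_mul_inner (w v a b : E2) :
    ⟪w, a⟫ * ⟪v, b⟫ - ⟪w, b⟫ * ⟪v, a⟫ = cross w v * cross a b := by
  simp only [inner_eq_coords, cross]
  ring

lemma cross_mul_inner_sub_cross_mul_inner (v a b : E2) :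
    cross v a * ⟪v, b⟫ - cross v b * ⟪v, a⟫ = ⟪v, v⟫ * cross b a := by
  simp only [inner_eq_coords, cross]
  ring

lemma cross_nonneg_of_tanAngle_le {v a b : E2} (hv : v ≠ 0) (hab : 0 < ⟪v, a⟫ * ⟪v, b⟫)
    (h : tanAngle v a ≤ tanAngle v b) : 0 ≤ cross a b := by
  have hvv : 0 < ⟪v, v⟫ := real_inner_self_pos.2 hv
  have ha : ⟪v, a⟫ ≠ 0 := left_ne_zero_of_mul hab.ne'
  have hb : ⟪v, b⟫ ≠ 0 := right_ne_zero_of_mul hab.ne'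
  have key : cross v a * ⟪v, b⟫ ≤ cross v b * ⟪v, a⟫ :=
    calc cross v a * ⟪v, b⟫ = tanAngle v a * (⟪v, a⟫ * ⟪v, b⟫) := by
          rw [tanAngle]; field_simp
      _ ≤ tanAngle v b * (⟪v, a⟫ * ⟪v, b⟫) := by gcongr
      _ = cross v b * ⟪v, a⟫ := by rw [tanAngle]; field_simp
  have := cross_mul_inner_sub_cross_mul_inner v a b
  rw [cross_swap a b] at this
  nlinarith

/-- The halfplane `⟪w, ·⟫ ≥ ⟪w, a⟫` contains everything at least as far beyond the line
`⟪v, ·⟫ = 0` as `a` on one side of the ray through `a`, the side given by the sign of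
`cross w v`. -/
lemma inner_le_inner_of_cross_mul_cross_nonneg {v w a b : E2} (ha : ⟪v, a⟫ < 0)
    (hab : ⟪v, b⟫ ≤ ⟪v, a⟫) (hwa : 0 < ⟪w, a⟫) (hside : 0 ≤ cross w v * cross a b) :
    ⟪w, a⟫ ≤ ⟪w, b⟫ := by
  have := inner_mul_inner_sub_inner_mul_inner w v a b
  nlinarith [mul_le_mul_of_nonneg_left hab hwa.le]

lemma exists_halving_ray (B : Finset E2) {v : E2} (hv : v ≠ 0) (x : E2)
    (hB : B.Nonempty) (hbeyond : ∀ p ∈ B, ⟪v, p - x⟫ < 0) :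
    ∃ s ∈ B, #B ≤ 2 * #{p ∈ B | 0 ≤ cross (s - x) (p - x)} ∧
      #B ≤ 2 * #{p ∈ B | cross (s - x) (p - x) ≤ 0} := by
  obtain ⟨s, hsB, hs_le, hs_ge⟩ := B.exists_median (fun p => tanAngle v (p - x)) hB
  refine ⟨s, hsB, hs_ge.trans (Nat.mul_le_mul_left 2 (card_le_card fun p hp => ?_)),
    hs_le.trans (Nat.mul_le_mul_left 2 (card_le_card fun p hp => ?_))⟩
  all_goals
    obtain ⟨hpB, hp⟩ := mem_filter.1 hp
    refine mem_filter.2 ⟨hpB, ?_⟩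
  · exact cross_nonneg_of_tanAngle_le hv
      (mul_pos_of_neg_of_neg (hbeyond s hsB) (hbeyond p hpB)) hp
  · rw [cross_swap, neg_nonpos]
    exact cross_nonneg_of_tanAngle_le hv
      (mul_pos_of_neg_of_neg (hbeyond p hpB) (hbeyond s hsB)) hp

lemma tukeyDepth_le_card (Q : Finset E2) {p v : E2} (hv : v ≠ 0) {c : ℝ} (hc : c ≤ ⟪v, p⟫) :
    tukeyDepth Q p ≤ #{x ∈ Q | c ≤ ⟪v, x⟫} :=
  Nat.sInf_le ⟨v, hv, c, hc, rfl⟩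

lemma exists_halfplane_card_eq_tukeyDepth (Q : Finset E2) (p : E2) :
    ∃ v ≠ 0, ∃ c ≤ ⟪v, p⟫, #{x ∈ Q | c ≤ ⟪v, x⟫} = tukeyDepth Q p := by
  obtain ⟨v, hv⟩ := exists_ne (0 : E2)
  obtain ⟨w, hw, c, hc, hcard⟩ := Nat.sInf_mem (s := {n : ℕ | ∃ v : E2, v ≠ 0 ∧ ∃ c : ℝ,
    c ≤ ⟪v, p⟫ ∧ n = #{x ∈ Q | c ≤ ⟪v, x⟫}}) ⟨_, v, hv, ⟪v, p⟫, le_rfl, rfl⟩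
  exact ⟨w, hw, c, hc, hcard.symm⟩

lemma exists_separating_halfplane_of_tukeyDepth_lt {Q : Finset E2} {t : ℕ} {x y : E2}
    (hx : t ≤ tukeyDepth Q x) (hy : tukeyDepth Q y < t) :
    ∃ (w : E2) (d : ℝ), ⟪w, x⟫ < d ∧ d ≤ ⟪w, y⟫ ∧ #{p ∈ Q | d ≤ ⟪w, p⟫} < t := by
  obtain ⟨w, hw, d, hdy, hcard⟩ := exists_halfplane_card_eq_tukeyDepth Q y
  refine ⟨w, d, lt_of_not_ge fun hdx => ?_, hdy, hcard ▸ hy⟩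
  have := tukeyDepth_le_card Q hw hdx
  omega

theorem card_filter_inner_lt_add_two_le {P : Finset E2} {t : ℕ} {v x : E2} (hv : v ≠ 0)
    (hx : t ≤ tukeyDepth P x) (hout : ∀ y, ⟪v, y⟫ < ⟪v, x⟫ → tukeyDepth P y < t) :
    #{p ∈ P | ⟪v, p⟫ < ⟪v, x⟫} + 2 ≤ 2 * t := by
  have hvv : 0 < ⟪v, v⟫ := real_inner_self_pos.2 hv
  have ht : 0 < t := (hout (x - v) (by rw [inner_sub_right]; linarith)).trans_le' (Nat.zero_le _)
  set B := {p ∈ P | ⟪v, p⟫ < ⟪v, x⟫}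
  by_contra! hB
  have hbeyond : ∀ p ∈ B, ⟪v, p - x⟫ < 0 := fun p hp => by
    rw [inner_sub_right, sub_neg]; exact (mem_filter.1 hp).2
  have hBne : B.Nonempty := card_pos.1 (by omega)
  obtain ⟨m, hmB, hm⟩ := B.exists_max_image (fun p => ⟪v, p - x⟫) hBne
  obtain ⟨s, hsB, hs_nonneg, hs_nonpos⟩ := exists_halving_ray B hv x hBne hbeyond
  set r := ⟪v, m - x⟫ / ⟪v, s - x⟫
  have hr : 0 < r := div_pos_of_neg_of_neg (hbeyond m hmB) (hbeyond s hsB)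
  have hys : ⟪v, r • (s - x)⟫ = ⟪v, m - x⟫ := by
    rw [real_inner_smul_right]; exact div_mul_cancel₀ _ (hbeyond s hsB).ne
  obtain ⟨w, d, hdx, hdy, hcard⟩ := exists_separating_halfplane_of_tukeyDepth_lt hx
    (hout (x + r • (s - x)) (by rw [inner_add_right, hys]; linarith [hbeyond m hmB]))
  rw [inner_add_right] at hdy
  have hwy : 0 < ⟪w, r • (s - x)⟫ := by linarith
  have hcover : ∀ p ∈ B, 0 ≤ cross w v * cross (s - x) (p - x) → d ≤ ⟪w, p⟫ := by
    intro p hp hside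
    have := inner_le_inner_of_cross_mul_cross_nonneg (hys ▸ hbeyond m hmB) (hys ▸ hm p hp) hwy
      (by rw [cross_smul_left, mul_left_comm]; exact mul_nonneg hr.le hside)
    rw [inner_sub_right] at this
    linarith
  obtain ⟨S, hSB, hS, hSside⟩ :
      ∃ S ⊆ B, #B ≤ 2 * #S ∧ ∀ p ∈ S, 0 ≤ cross w v * cross (s - x) (p - x) := by
    rcases le_or_gt 0 (cross w v) with hwv | hwv
    · exact ⟨_, filter_subset _ _, hs_nonneg, fun p hp => mul_nonneg hwv (mem_filter.1 hp).2⟩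
    · exact ⟨_, filter_subset _ _, hs_nonpos,
        fun p hp => mul_nonneg_of_nonpos_of_nonpos hwv.le (mem_filter.1 hp).2⟩
  have hSd : S ⊆ {p ∈ P | d ≤ ⟪w, p⟫} := fun p hp =>
    mem_filter.2 ⟨(mem_filter.1 (hSB hp)).1, hcover p (hSB hp) (hSside p hp)⟩
  have := card_le_card hSd
  omega

theorem tangent_halfplanes_card_le_general
    (P : Finset E2) (t₀ : ℕ)
    (T : Set E2) (hT : T = {x : E2 | t₀ ≤ tukeyDepth P x})
    (v₁ v₂ : E2) (c₁ c₂ : ℝ) (hv₁ : v₁ ≠ 0) (hv₂ : v₂ ≠ 0)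
    (hside₁ : ∀ x ∈ T, c₁ ≤ ⟪v₁, x⟫) (hside₂ : ∀ x ∈ T, c₂ ≤ ⟪v₂, x⟫)
    (htan₁ : ∃ x ∈ T, ⟪v₁, x⟫ = c₁) (htan₂ : ∃ x ∈ T, ⟪v₂, x⟫ = c₂) :
    (P.filter fun p => ⟪v₁, p⟫ < c₁ ∨ ⟪v₂, p⟫ < c₂).card ≤ 4 * t₀ := by
  subst hT
  obtain ⟨x₁, hx₁, rfl⟩ := htan₁
  obtain ⟨x₂, hx₂, rfl⟩ := htan₂
  have h₁ := card_filter_inner_lt_add_two_le hv₁ hx₁ fun y hy =>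
    lt_of_not_ge fun hyT => (hside₁ y hyT).not_gt hy
  have h₂ := card_filter_inner_lt_add_two_le hv₂ hx₂ fun y hy =>
    lt_of_not_ge fun hyT => (hside₂ y hyT).not_gt hy
  rw [filter_or]
  have := card_union_le {p ∈ P | ⟪v₁, p⟫ < ⟪v₁, x₁⟫} {p ∈ P | ⟪v₂, p⟫ < ⟪v₂, x₂⟫}
  omega

/-- For a query `q` outside the Tukey region `T` of depth `t₀`, the set `P_q` of
sites in the union of the two tangent halfplanes from `q` (the sides not
containing `T`) has at most `4·t₀` points. -/
theorem tangent_halfplanes_card_le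
    (P : Finset E2) (t₀ : ℕ) (q : E2)
    (T : Set E2) (hT : T = {x : E2 | t₀ ≤ tukeyDepth P x})
    (hq : q ∉ T)
    (v₁ v₂ : E2) (c₁ c₂ : ℝ) (hv₁ : v₁ ≠ 0) (hv₂ : v₂ ≠ 0)
    (hq₁ : ⟪v₁, q⟫ = c₁) (hq₂ : ⟪v₂, q⟫ = c₂)
    (hside₁ : ∀ x ∈ T, c₁ ≤ ⟪v₁, x⟫) (hside₂ : ∀ x ∈ T, c₂ ≤ ⟪v₂, x⟫)
    (htan₁ : ∃ x ∈ T, ⟪v₁, x⟫ = c₁) (htan₂ : ∃ x ∈ T, ⟪v₂, x⟫ = c₂) :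
    (P.filter fun p => ⟪v₁, p⟫ < c₁ ∨ ⟪v₂, p⟫ < c₂).card ≤ 4 * t₀ :=
  tangent_halfplanes_card_le_general P t₀ T hT v₁ v₂ c₁ c₂ hv₁ hv₂ hside₁ hside₂ htan₁ htan₂
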